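/- arXiv:2603.14246 — 2 statements merged into one kernel-verified Lean document; each statement's English description precedes it below -/
import Mathlib

section
/- For causal finite-length real sequences c_i and c_j of length n, their convolutions with a finite impulse response h of length K satisfy the lower bound ‖c_i * h − c_j * h‖₂ ≥ H_min · ‖c_i − c_j‖₂, where H_min = inf_{φ ∈ [−π,π]} |H(φ)| and H(φ) = Σ_{k=0}^{K−1} h_k e^{−jφk} is the DTFT of h. -/
open Real Complex Finset

/-- Convolution of a zero-extended sequence `c : ℤ → ℝ` with a FIR filter
`h` of length `K`: `(c*h)_t = ∑_{k=0}^{K-1} h_k c_{t-k}`. -/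
noncomputable def convWith (K : ℕ) (h : ℕ → ℝ) (c : ℤ → ℝ) (t : ℤ) : ℝ :=
  ∑ k ∈ Finset.range K, h k * c (t - k)

/-- DTFT of the FIR filter `h` of length `K` at frequency `φ`. -/
noncomputable def dtft (K : ℕ) (h : ℕ → ℝ) (φ : ℝ) : ℂ :=
  ∑ k ∈ Finset.range K, (h k : ℂ) * Complex.exp (-(φ * k) * Complex.I)


lemma ortho (m : ℤ) : (∫ φ : ℝ in (-Real.pi)..Real.pi, Complex.exp ((m : ℂ) * φ * Complex.I))
    = if m = 0 then (2 * Real.pi : ℂ) else 0 := by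
  rcases eq_or_ne m 0 with hm | hm
  · subst hm
    simp only [Int.cast_zero, zero_mul, Complex.exp_zero, if_pos rfl]
    rw [intervalIntegral.integral_const]
    push_cast
    ring_nf
    simp [two_mul]
  · rw [if_neg hm]
    have hc : ((m : ℂ) * Complex.I) ≠ 0 := by
      simp [Complex.I_ne_zero, Int.cast_ne_zero, hm]
    have : ∀ φ : ℝ, (m : ℂ) * φ * Complex.I = ((m : ℂ) * Complex.I) * φ := by intro φ; ring
    simp_rw [this]
    rw [integral_exp_mul_complex hc]
    have h1 : Complex.exp ((m : ℂ) * Complex.I * Real.pi) = (-1 : ℂ) ^ m := by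
      rw [show (m : ℂ) * Complex.I * Real.pi = (m : ℂ) * (Real.pi * Complex.I) by ring,
        Complex.exp_int_mul, Complex.exp_pi_mul_I]
    have h2 : Complex.exp ((m : ℂ) * Complex.I * (-Real.pi : ℝ)) = ((-1 : ℂ) ^ m)⁻¹ := by
      rw [show ((m : ℂ) * Complex.I * ((-Real.pi : ℝ) : ℂ)) = (-m : ℤ) * (Real.pi * Complex.I) by push_cast; ring,
        Complex.exp_int_mul, Complex.exp_pi_mul_I, zpow_neg]
    rw [h1, h2]
    have : ((-1 : ℂ) ^ m)⁻¹ = (-1 : ℂ) ^ m := by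
      rcases Int.even_or_odd m with he | ho
      · rw [he.neg_one_zpow, inv_one]
      · rw [Odd.neg_one_zpow ho]; norm_num
    rw [this, sub_self, zero_div]

lemma parseval (N : ℕ) (a : ℕ → ℝ) :
    (∫ φ : ℝ in (-Real.pi)..Real.pi,
      Complex.normSq (∑ t ∈ Finset.range N, (a t : ℂ) * Complex.exp (-((φ : ℂ) * (t + 1)) * Complex.I)))
    = 2 * Real.pi * ∑ t ∈ Finset.range N, (a t) ^ 2 := by
  have key : ∀ φ : ℝ, ((Complex.normSq (∑ t ∈ Finset.range N, (a t : ℂ) *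
        Complex.exp (-((φ : ℂ) * (t + 1)) * Complex.I)) : ℂ)) =
      ∑ t ∈ Finset.range N, ∑ s ∈ Finset.range N,
        ((a t : ℂ) * (a s)) * Complex.exp ((((s : ℤ) - (t : ℤ) : ℤ) : ℂ) * φ * Complex.I) := by
    intro φ
    rw [← Complex.mul_conj, map_sum, Finset.sum_mul_sum]
    refine Finset.sum_congr rfl fun t _ => Finset.sum_congr rfl fun s _ => ?_
    have hconj2 : (starRingEnd ℂ) (Complex.exp (-((φ : ℂ) * (s + 1)) * Complex.I)) =
        Complex.exp (((φ : ℂ) * (s + 1)) * Complex.I) := by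
      rw [← Complex.exp_conj]
      congr 1
      simp only [map_mul, map_neg, Complex.conj_I, Complex.conj_ofReal, map_add,
        map_one, Complex.conj_natCast]
      ring
    rw [map_mul, Complex.conj_ofReal, hconj2, mul_mul_mul_comm, ← Complex.exp_add]
    congr 1
    push_cast
    ring
  have cont : ∀ (t s : ℕ), IntervalIntegrable
      (fun φ : ℝ => ((a t : ℂ) * (a s)) * Complex.exp ((((s : ℤ) - (t : ℤ) : ℤ) : ℂ) * φ * Complex.I))
      MeasureTheory.volume (-Real.pi) Real.pi := by
    intro t s
    apply Continuous.intervalIntegrable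
    fun_prop
  have main : (∫ φ : ℝ in (-Real.pi)..Real.pi, ((Complex.normSq (∑ t ∈ Finset.range N, (a t : ℂ) *
        Complex.exp (-((φ : ℂ) * (t + 1)) * Complex.I)) : ℂ)))
      = ((2 * Real.pi * ∑ t ∈ Finset.range N, (a t) ^ 2 : ℝ) : ℂ) := by
    calc (∫ φ : ℝ in (-Real.pi)..Real.pi, ((Complex.normSq (∑ t ∈ Finset.range N, (a t : ℂ) *
        Complex.exp (-((φ : ℂ) * (t + 1)) * Complex.I)) : ℂ)))
        = ∫ φ : ℝ in (-Real.pi)..Real.pi, ∑ t ∈ Finset.range N, ∑ s ∈ Finset.range N,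
            ((a t : ℂ) * (a s)) * Complex.exp ((((s : ℤ) - (t : ℤ) : ℤ) : ℂ) * φ * Complex.I) := by
          exact intervalIntegral.integral_congr (fun φ _ => key φ)
      _ = ∑ t ∈ Finset.range N, ∑ s ∈ Finset.range N, ∫ φ : ℝ in (-Real.pi)..Real.pi,
            ((a t : ℂ) * (a s)) * Complex.exp ((((s : ℤ) - (t : ℤ) : ℤ) : ℂ) * φ * Complex.I) := by
          rw [intervalIntegral.integral_finset_sum
            (f := fun t (φ : ℝ) => ∑ s ∈ Finset.range N,
              ((a t : ℂ) * (a s)) * Complex.exp ((((s : ℤ) - (t : ℤ) : ℤ) : ℂ) * φ * Complex.I))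
            (fun t _ => by apply Continuous.intervalIntegrable; fun_prop)]
          exact Finset.sum_congr rfl fun t _ =>
            intervalIntegral.integral_finset_sum (fun s _ => cont t s)
      _ = ∑ t ∈ Finset.range N, ∑ s ∈ Finset.range N,
            ((a t : ℂ) * (a s)) * (if ((s : ℤ) - (t : ℤ)) = 0 then (2 * Real.pi : ℂ) else 0) := by
          exact Finset.sum_congr rfl fun t _ => Finset.sum_congr rfl fun s _ => by
            rw [intervalIntegral.integral_const_mul, ortho]
      _ = ∑ t ∈ Finset.range N, ((a t : ℂ) * (a t)) * (2 * Real.pi : ℂ) := by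
          refine Finset.sum_congr rfl fun t ht => ?_
          rw [Finset.sum_eq_single t]
          · simp
          · intro s _ hst
            rw [if_neg (by omega), mul_zero]
          · intro hti; exact absurd ht hti
      _ = ((2 * Real.pi * ∑ t ∈ Finset.range N, (a t) ^ 2 : ℝ) : ℂ) := by
          push_cast
          rw [Finset.mul_sum]
          exact Finset.sum_congr rfl fun t _ => by ring
  rw [intervalIntegral.integral_ofReal] at main
  exact_mod_cast main

lemma sum_range_eq_sum_Icc (g : ℤ → ℂ) (M : ℕ) (c : ℤ) :
    ∑ t ∈ Finset.range M, g ((t : ℤ) + c) = ∑ x ∈ Finset.Icc c (c + M - 1), g x := by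
  have hmap : Finset.map ⟨fun t : ℕ => (t : ℤ) + c, fun a b hab => by exact_mod_cast add_right_cancel hab⟩ (Finset.range M)
      = Finset.Icc c (c + M - 1) := by
    ext x
    simp only [Finset.mem_map, Finset.mem_range, Function.Embedding.coeFn_mk, Finset.mem_Icc]
    constructor
    · rintro ⟨t, ht, rfl⟩; show c ≤ (t : ℤ) + c ∧ (t : ℤ) + c ≤ c + M - 1; omega
    · rintro ⟨h1, h2⟩; exact ⟨(x - c).toNat, by omega, by show ((x - c).toNat : ℤ) + c = x; omega⟩
  rw [← hmap, Finset.sum_map]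
  rfl

lemma shift_sum (n : ℕ) (g : ℤ → ℂ) (hg : ∀ x : ℤ, x ≤ 0 ∨ (n : ℤ) < x → g x = 0)
    (m k : ℕ) (h2 : k + n ≤ m) :
    ∑ t ∈ Finset.range m, g ((t : ℤ) + 1 - k) = ∑ s ∈ Finset.range n, g ((s : ℤ) + 1) := by
  have l1 : ∑ t ∈ Finset.range m, g ((t : ℤ) + 1 - k)
      = ∑ x ∈ Finset.Icc ((1 : ℤ) - k) (1 - k + m - 1), g x := by
    rw [← sum_range_eq_sum_Icc g m (1 - k)]
    exact Finset.sum_congr rfl fun t _ => by congr 1; ring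
  have l2 : ∑ s ∈ Finset.range n, g ((s : ℤ) + 1) = ∑ x ∈ Finset.Icc (1 : ℤ) (1 + n - 1), g x := by
    rw [← sum_range_eq_sum_Icc g n 1]
  rw [l1, l2]
  symm
  apply Finset.sum_subset
  · intro x hx
    simp only [Finset.mem_Icc] at hx ⊢
    omega
  · intro x _ hx
    simp only [Finset.mem_Icc] at hx
    exact hg x (by omega)

lemma conv_dtft (n K : ℕ) (h : ℕ → ℝ) (d : ℤ → ℝ)
    (hd : ∀ t : ℤ, t ≤ 0 ∨ (n : ℤ) < t → d t = 0) (hK : 0 < K) (φ : ℝ) :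
    ∑ t ∈ Finset.range (n + K - 1),
        ((convWith K h d ((t : ℤ) + 1) : ℂ)) * Complex.exp (-((φ : ℂ) * (t + 1)) * Complex.I)
      = dtft K h φ * ∑ s ∈ Finset.range n,
          ((d ((s : ℤ) + 1) : ℂ)) * Complex.exp (-((φ : ℂ) * (s + 1)) * Complex.I) := by
  set g : ℤ → ℂ := fun x => (d x : ℂ) * Complex.exp (-((φ : ℂ) * x) * Complex.I) with hg
  have hg0 : ∀ x : ℤ, x ≤ 0 ∨ (n : ℤ) < x → g x = 0 := by
    intro x hx; simp [hg, hd x hx]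
  have lhs_eq : ∀ t : ℕ, ((convWith K h d ((t : ℤ) + 1) : ℂ)) *
      Complex.exp (-((φ : ℂ) * (t + 1)) * Complex.I)
      = ∑ k ∈ Finset.range K, (h k : ℂ) * Complex.exp (-(φ * k) * Complex.I) *
          g ((t : ℤ) + 1 - k) := by
    intro t
    rw [convWith]
    push_cast
    rw [Finset.sum_mul]
    refine Finset.sum_congr rfl fun k _ => ?_
    rw [hg]
    simp only
    rw [mul_mul_mul_comm, ← Complex.exp_add]
    push_cast
    ring_nf
  calc ∑ t ∈ Finset.range (n + K - 1),
        ((convWith K h d ((t : ℤ) + 1) : ℂ)) * Complex.exp (-((φ : ℂ) * (t + 1)) * Complex.I)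
      = ∑ t ∈ Finset.range (n + K - 1), ∑ k ∈ Finset.range K,
          (h k : ℂ) * Complex.exp (-(φ * k) * Complex.I) * g ((t : ℤ) + 1 - k) := by
        exact Finset.sum_congr rfl fun t _ => lhs_eq t
    _ = ∑ k ∈ Finset.range K, (h k : ℂ) * Complex.exp (-(φ * k) * Complex.I) *
          ∑ t ∈ Finset.range (n + K - 1), g ((t : ℤ) + 1 - k) := by
        rw [Finset.sum_comm]
        exact Finset.sum_congr rfl fun k _ => by rw [Finset.mul_sum]
    _ = ∑ k ∈ Finset.range K, (h k : ℂ) * Complex.exp (-(φ * k) * Complex.I) *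
          ∑ s ∈ Finset.range n, g ((s : ℤ) + 1) := by
        refine Finset.sum_congr rfl fun k hk => ?_
        rw [shift_sum n g hg0 (n + K - 1) k (by simp at hk; omega)]
    _ = dtft K h φ * ∑ s ∈ Finset.range n,
          ((d ((s : ℤ) + 1) : ℂ)) * Complex.exp (-((φ : ℂ) * (s + 1)) * Complex.I) := by
        rw [dtft, Finset.sum_mul]
        refine Finset.sum_congr rfl fun k _ => ?_
        rw [Finset.mul_sum, Finset.mul_sum]
        refine Finset.sum_congr rfl fun s _ => ?_
        rw [hg]
        simp only
        push_cast
        ring_nf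

/-- minimum distance of the convoluted codewords.  For causal
finite-length sequences `c i`, `c j` (supported on `{1,…,n}`) convolved with an
FIR `h` of length `K`, one has `‖c_i*h − c_j*h‖ ≥ H_min ‖c_i − c_j‖` where
`H_min = inf_{φ∈[−π,π]} |dtft h φ|`. -/
theorem stmt_0 (n K : ℕ) (hn : 0 < n) (hK : 0 < K) (h : ℕ → ℝ)
    (ci cj : ℤ → ℝ)
    (hci : ∀ t : ℤ, t ≤ 0 ∨ (n : ℤ) < t → ci t = 0)
    (hcj : ∀ t : ℤ, t ≤ 0 ∨ (n : ℤ) < t → cj t = 0)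
    (Hmin : ℝ)
    (hHmin : Hmin = sInf ((fun φ => ‖dtft K h φ‖) '' Set.Icc (-Real.pi) Real.pi)) :
    Real.sqrt (∑ t ∈ Finset.range (n + K - 1),
        (convWith K h ci (t + 1) - convWith K h cj (t + 1)) ^ 2)
      ≥ Hmin * Real.sqrt (∑ t ∈ Finset.range n, (ci (t + 1) - cj (t + 1)) ^ 2) := by
  set d : ℤ → ℝ := fun t => ci t - cj t with hdd
  have hd : ∀ t : ℤ, t ≤ 0 ∨ (n : ℤ) < t → d t = 0 := by
    intro t ht; simp [hdd, hci t ht, hcj t ht]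
  have hconv : ∀ t : ℤ, convWith K h ci t - convWith K h cj t = convWith K h d t := by
    intro t
    simp only [convWith, hdd, ← Finset.sum_sub_distrib]
    exact Finset.sum_congr rfl fun k _ => by ring
  -- nonnegativity facts about Hmin
  have hHmin0 : 0 ≤ Hmin := by
    rw [hHmin]
    apply Real.sInf_nonneg
    rintro x ⟨φ, _, rfl⟩
    exact norm_nonneg _
  have hle : ∀ φ ∈ Set.Icc (-Real.pi) Real.pi, Hmin ≤ ‖dtft K h φ‖ := by
    intro φ hφ
    rw [hHmin]
    exact csInf_le ⟨0, by rintro x ⟨ψ, _, rfl⟩; exact norm_nonneg _⟩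
      ⟨φ, hφ, rfl⟩
  set B : ℝ := ∑ t ∈ Finset.range n, (d ((t : ℤ) + 1)) ^ 2 with hB
  set A : ℝ := ∑ t ∈ Finset.range (n + K - 1), (convWith K h d ((t : ℤ) + 1)) ^ 2 with hA
  have hBnonneg : 0 ≤ B := Finset.sum_nonneg fun t _ => sq_nonneg _
  -- Parseval + pointwise bound ⇒ Hmin^2 * B ≤ A
  have key : Hmin ^ 2 * B ≤ A := by
    have P1 := parseval n (fun t => d ((t : ℤ) + 1))
    have P2 := parseval (n + K - 1) (fun t => convWith K h d ((t : ℤ) + 1))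
    set D : ℝ → ℂ := fun φ => ∑ t ∈ Finset.range n,
      ((d ((t : ℤ) + 1) : ℂ)) * Complex.exp (-((φ : ℂ) * (t + 1)) * Complex.I) with hD
    set E : ℝ → ℂ := fun φ => ∑ t ∈ Finset.range (n + K - 1),
      ((convWith K h d ((t : ℤ) + 1) : ℂ)) * Complex.exp (-((φ : ℂ) * (t + 1)) * Complex.I) with hE
    have hED : ∀ φ : ℝ, E φ = dtft K h φ * D φ := fun φ => conv_dtft n K h d hd hK φ
    have mono : (∫ φ : ℝ in (-Real.pi)..Real.pi, Hmin ^ 2 * Complex.normSq (D φ))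
        ≤ ∫ φ : ℝ in (-Real.pi)..Real.pi, Complex.normSq (E φ) := by
      apply intervalIntegral.integral_mono_on (by linarith [Real.pi_pos])
      · apply Continuous.intervalIntegrable
        apply Continuous.mul continuous_const
        apply Complex.continuous_normSq.comp
        fun_prop
      · apply Continuous.intervalIntegrable
        apply Complex.continuous_normSq.comp
        fun_prop
      · intro φ hφ
        rw [hED φ, Complex.normSq_mul]
        apply mul_le_mul_of_nonneg_right _ (Complex.normSq_nonneg _)
        rw [← Complex.sq_norm]
        exact pow_le_pow_left₀ hHmin0 (hle φ hφ) 2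
    rw [intervalIntegral.integral_const_mul] at mono
    have P1' : (∫ φ : ℝ in (-Real.pi)..Real.pi, Complex.normSq (D φ)) = 2 * Real.pi * B := P1
    have P2' : (∫ φ : ℝ in (-Real.pi)..Real.pi, Complex.normSq (E φ)) = 2 * Real.pi * A := P2
    rw [P1', P2'] at mono
    nlinarith [Real.pi_pos]
  -- convert the goal
  have goalA : ∑ t ∈ Finset.range (n + K - 1),
      (convWith K h ci (t + 1) - convWith K h cj (t + 1)) ^ 2 = A := by
    exact Finset.sum_congr rfl fun t _ => by rw [hconv]
  rw [ge_iff_le, goalA]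
  calc Hmin * Real.sqrt B = Real.sqrt (Hmin ^ 2) * Real.sqrt B := by
        rw [Real.sqrt_sq hHmin0]
    _ = Real.sqrt (Hmin ^ 2 * B) := (Real.sqrt_mul (sq_nonneg _) _).symm
    _ ≤ Real.sqrt A := Real.sqrt_le_sqrt key
end

section
/- Suppose M(n) ≤ 2^{−0.599 n̄} · (A + 2r₀)^{n̄} / Vol(B_{n̄}(r₀)) where n̄ = n + K − 1, K = n^κ, A = K·L·P = O(n^κ), and r₀ = a/n̄^{(1+2b)/2}. Then limsup_{n→∞} log₂ M(n)/(n log₂ n) ≤ 1 + κ + b, for constants L, P, a > 0, κ ∈ [0,1), b > 0. -/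
open Filter Real
set_option maxHeartbeats 1600000

lemma aux_gamma_le {x : ℝ} (hx : 2 ≤ x) : Real.Gamma x ≤ x ^ x := by
  have hx0 : (0:ℝ) < x := by linarith
  have hx1 : (1:ℝ) ≤ x := by linarith
  have hxm : x ≤ (⌈x⌉₊ : ℝ) := Nat.le_ceil x
  have hm2 : 2 ≤ ⌈x⌉₊ := by exact_mod_cast hx.trans hxm
  have h1 : Real.Gamma x ≤ Real.Gamma (⌈x⌉₊ : ℝ) :=
    Real.Gamma_strictMonoOn_Ici.monotoneOn (by simpa using hx)
      (by simp only [Set.mem_Ici]; linarith) hxm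
  have hcast : ((⌈x⌉₊ : ℝ)) = ((⌈x⌉₊ - 1 : ℕ) : ℝ) + 1 := by
    have : 1 ≤ ⌈x⌉₊ := by omega
    push_cast [Nat.cast_sub this]
    ring
  have h2 : Real.Gamma (⌈x⌉₊ : ℝ) = ((Nat.factorial (⌈x⌉₊ - 1)) : ℝ) := by
    rw [hcast, Real.Gamma_nat_eq_factorial]
  have h3 : ((Nat.factorial (⌈x⌉₊ - 1)) : ℝ) ≤ (((⌈x⌉₊ - 1 : ℕ)) : ℝ) ^ (⌈x⌉₊ - 1 : ℕ) := by
    exact_mod_cast Nat.factorial_le_pow _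
  have h4 : (((⌈x⌉₊ - 1 : ℕ)) : ℝ) ≤ x := by
    have hc := Nat.ceil_lt_add_one hx0.le
    rw [hcast] at hc
    linarith
  have h5 : (((⌈x⌉₊ - 1 : ℕ)) : ℝ) ^ (⌈x⌉₊ - 1 : ℕ) ≤ x ^ (⌈x⌉₊ - 1 : ℕ) :=
    pow_le_pow_left₀ (by positivity) h4 _
  have h6 : x ^ (⌈x⌉₊ - 1 : ℕ) ≤ x ^ x := by
    rw [← Real.rpow_natCast x (⌈x⌉₊ - 1)]
    exact Real.rpow_le_rpow_of_exponent_le hx1 h4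
  calc Real.Gamma x ≤ Real.Gamma (⌈x⌉₊:ℝ) := h1
    _ = _ := h2
    _ ≤ _ := h3
    _ ≤ _ := h5
    _ ≤ _ := h6

/-- converse rate upper bound.  If
`M n ≤ 2^{−0.599 n̄} (A + 2r₀)^{n̄} / Vol(B_{n̄}(r₀))` with `n̄ = n + K − 1`,
`K = n^κ`, `A = K·L·P` and `r₀ = a/n̄^{(1+2b)/2}`, then
`limsup log₂ M(n)/(n log₂ n) ≤ 1 + κ + b`. -/
theorem stmt_12 (L P a κ b : ℝ) (hL : 0 < L) (hP : 0 < P) (ha : 0 < a)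
    (hκ0 : 0 ≤ κ) (hκ1 : κ < 1) (hb : 0 < b)
    (nbar A r₀ : ℕ → ℝ)
    (hnbar : ∀ n : ℕ, nbar n = (n : ℝ) + (n : ℝ) ^ κ - 1)
    (hA : ∀ n : ℕ, A n = (n : ℝ) ^ κ * L * P)
    (hr₀ : ∀ n : ℕ, r₀ n = a / nbar n ^ ((1 + 2 * b) / 2))
    (M : ℕ → ℕ)
    (hM : ∀ n : ℕ, 1 < n → (M n : ℝ) ≤
      (2 : ℝ) ^ (-(0.599 : ℝ) * nbar n) * (A n + 2 * r₀ n) ^ (nbar n)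
        / (Real.pi ^ (nbar n / 2) * r₀ n ^ (nbar n) / Real.Gamma (nbar n / 2 + 1))) :
    Filter.limsup (fun n : ℕ => Real.logb 2 (M n) / ((n : ℝ) * Real.logb 2 n)) Filter.atTop
      ≤ 1 + κ + b := by
  have hpos : ∀ᶠ n : ℕ in atTop,
      (0:ℝ) ≤ Real.logb 2 (M n) / ((n : ℝ) * Real.logb 2 n) := by
    filter_upwards [Filter.eventually_ge_atTop 2] with n hn
    have hx2 : (2:ℝ) ≤ (n:ℝ) := by exact_mod_cast hn
    apply div_nonneg
    · rcases Nat.eq_zero_or_pos (M n) with h | h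
      · simp [h]
      · exact Real.logb_nonneg one_lt_two (by exact_mod_cast h)
    · exact mul_nonneg (by linarith) (Real.logb_nonneg one_lt_two (by linarith))
  have hcb := Filter.isCoboundedUnder_le_of_eventually_le atTop hpos
  have key : ∀ ε : ℝ, 0 < ε →
      Filter.limsup (fun n : ℕ => Real.logb 2 (M n) / ((n : ℝ) * Real.logb 2 n)) Filter.atTop
        ≤ 1 + κ + b + ε := by
    intro ε hε
    apply Filter.limsup_le_of_le hcb
    set C : ℝ := L * P + 2 * a with hCdef
    have hp0 : (0:ℝ) < (1 + 2 * b) / 2 := by linarith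
    have hC0 : 0 < C := by rw [hCdef]; nlinarith
    have E1 : ∀ᶠ n : ℕ in atTop, (2:ℝ) ≤ (n:ℝ) :=
      tendsto_natCast_atTop_atTop.eventually_ge_atTop 2
    have E2 : ∀ᶠ n : ℕ in atTop, 3 * (1 + κ + b) / ε ≤ (n:ℝ) ^ (1 - κ) :=
      ((tendsto_rpow_atTop (by linarith)).comp tendsto_natCast_atTop_atTop).eventually_ge_atTop _
    have E3 : ∀ᶠ n : ℕ in atTop, 3 * (2 * ((1 + 2 * b) / 2) + 1 + 2 * (|Real.logb 2 C| + |Real.logb 2 a|)) / ε ≤ Real.logb 2 (n:ℝ) :=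
      ((Real.tendsto_logb_atTop one_lt_two).comp tendsto_natCast_atTop_atTop).eventually_ge_atTop _
    have E4 : ∀ᶠ n : ℕ in atTop, (6 / ε : ℝ) ≤ (n:ℝ) :=
      tendsto_natCast_atTop_atTop.eventually_ge_atTop _
    filter_upwards [E1, E2, E3, E4] with n h1 h2 h3 h4
    -- notation
    have hx0 : (0:ℝ) < (n:ℝ) := by linarith
    have hx1 : (1:ℝ) ≤ (n:ℝ) := by linarith
    have hn1 : 1 < n := by exact_mod_cast (show (1:ℝ) < (n:ℝ) by linarith)
    have hlx1 : (1:ℝ) ≤ Real.logb 2 (n:ℝ) := by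
      have := Real.logb_le_logb_of_le one_lt_two (by norm_num : (0:ℝ) < 2) h1
      rwa [Real.logb_self_eq_one one_lt_two] at this
    have hlx0 : (0:ℝ) ≤ Real.logb 2 (n:ℝ) := by linarith
    have hxκ1 : (1:ℝ) ≤ (n:ℝ) ^ κ := Real.one_le_rpow hx1 hκ0
    have hxκx : (n:ℝ) ^ κ ≤ (n:ℝ) := by
      calc (n:ℝ) ^ κ ≤ (n:ℝ) ^ (1:ℝ) := Real.rpow_le_rpow_of_exponent_le hx1 hκ1.le
        _ = (n:ℝ) := Real.rpow_one _
    have hnb : nbar n = (n:ℝ) + (n:ℝ) ^ κ - 1 := hnbar n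
    have hnbge : (n:ℝ) ≤ nbar n := by rw [hnb]; linarith
    have hnb2 : 2 ≤ nbar n := by linarith
    have hnb0 : 0 < nbar n := by linarith
    have hnb1 : 1 ≤ nbar n := by linarith
    have hnble : nbar n ≤ 2 * (n:ℝ) := by rw [hnb]; linarith
    have hnble' : nbar n ≤ (n:ℝ) + (n:ℝ) ^ κ := by rw [hnb]; linarith
    have hnbp1 : (1:ℝ) ≤ nbar n ^ ((1 + 2 * b) / 2) := Real.one_le_rpow hnb1 (by linarith)
    have hnbp0 : (0:ℝ) < nbar n ^ ((1 + 2 * b) / 2) := Real.rpow_pos_of_pos hnb0 _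
    have hr0pos : 0 < r₀ n := by rw [hr₀ n]; positivity
    have hr0le : r₀ n ≤ a := by rw [hr₀ n]; exact div_le_self ha.le hnbp1
    have hApos : 0 < A n := by rw [hA n]; positivity
    have hS0 : 0 < A n + 2 * r₀ n := by linarith
    have hSle : A n + 2 * r₀ n ≤ C * (n:ℝ) ^ κ := by
      rw [hA n, hCdef]
      nlinarith [mul_pos hL hP]
    -- Gamma bound
    have hGpos : 0 < Real.Gamma (nbar n / 2 + 1) := Real.Gamma_pos_of_pos (by linarith)
    have hGle : Real.Gamma (nbar n / 2 + 1) ≤ nbar n ^ (nbar n / 2 + 1) := by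
      calc Real.Gamma (nbar n / 2 + 1) ≤ (nbar n / 2 + 1) ^ (nbar n / 2 + 1) :=
            aux_gamma_le (by linarith)
        _ ≤ nbar n ^ (nbar n / 2 + 1) :=
            Real.rpow_le_rpow (by linarith) (by linarith) (by linarith)
    -- log of RHS
    have hdenpos : 0 < Real.pi ^ (nbar n / 2) * r₀ n ^ (nbar n) / Real.Gamma (nbar n / 2 + 1) :=
      div_pos (mul_pos (Real.rpow_pos_of_pos Real.pi_pos _) (Real.rpow_pos_of_pos hr0pos _)) hGpos
    have hnumpos : 0 < (2:ℝ) ^ (-(0.599:ℝ) * nbar n) * (A n + 2 * r₀ n) ^ (nbar n) :=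
      mul_pos (Real.rpow_pos_of_pos two_pos _) (Real.rpow_pos_of_pos hS0 _)
    have hRHSpos : 0 < (2:ℝ) ^ (-(0.599:ℝ) * nbar n) * (A n + 2 * r₀ n) ^ (nbar n)
        / (Real.pi ^ (nbar n / 2) * r₀ n ^ (nbar n) / Real.Gamma (nbar n / 2 + 1)) :=
      div_pos hnumpos hdenpos
    have hRHS : Real.logb 2 ((2:ℝ) ^ (-(0.599:ℝ) * nbar n) * (A n + 2 * r₀ n) ^ (nbar n)
        / (Real.pi ^ (nbar n / 2) * r₀ n ^ (nbar n) / Real.Gamma (nbar n / 2 + 1)))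
        = -(0.599) * nbar n + nbar n * Real.logb 2 (A n + 2 * r₀ n)
          - ((nbar n / 2) * Real.logb 2 Real.pi + nbar n * Real.logb 2 (r₀ n)
             - Real.logb 2 (Real.Gamma (nbar n / 2 + 1))) := by
      rw [Real.logb_div hnumpos.ne' hdenpos.ne',
        Real.logb_mul (Real.rpow_pos_of_pos two_pos _).ne' (Real.rpow_pos_of_pos hS0 _).ne',
        Real.logb_div (mul_pos (Real.rpow_pos_of_pos Real.pi_pos _)
          (Real.rpow_pos_of_pos hr0pos _)).ne' hGpos.ne',
        Real.logb_mul (Real.rpow_pos_of_pos Real.pi_pos _).ne'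
          (Real.rpow_pos_of_pos hr0pos _).ne',
        Real.logb_rpow (by norm_num) (by norm_num),
        Real.logb_rpow_eq_mul_logb_of_pos hS0,
        Real.logb_rpow_eq_mul_logb_of_pos Real.pi_pos,
        Real.logb_rpow_eq_mul_logb_of_pos hr0pos]
    -- term bounds
    have hlS : Real.logb 2 (A n + 2 * r₀ n) ≤ Real.logb 2 C + κ * Real.logb 2 (n:ℝ) := by
      have := Real.logb_le_logb_of_le one_lt_two hS0 hSle
      rwa [Real.logb_mul hC0.ne' (Real.rpow_pos_of_pos hx0 κ).ne',
        Real.logb_rpow_eq_mul_logb_of_pos hx0] at this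
    have hlr : Real.logb 2 (r₀ n) = Real.logb 2 a - (1 + 2 * b) / 2 * Real.logb 2 (nbar n) := by
      rw [hr₀ n, Real.logb_div ha.ne' hnbp0.ne', Real.logb_rpow_eq_mul_logb_of_pos hnb0]
    have hlΓ : Real.logb 2 (Real.Gamma (nbar n / 2 + 1))
        ≤ (nbar n / 2 + 1) * Real.logb 2 (nbar n) := by
      have := Real.logb_le_logb_of_le one_lt_two hGpos hGle
      rwa [Real.logb_rpow_eq_mul_logb_of_pos hnb0] at this
    have hlnb0 : 0 ≤ Real.logb 2 (nbar n) := Real.logb_nonneg one_lt_two hnb1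
    have hlnb : Real.logb 2 (nbar n) ≤ 1 + Real.logb 2 (n:ℝ) := by
      have := Real.logb_le_logb_of_le one_lt_two hnb0 hnble
      rwa [Real.logb_mul two_ne_zero hx0.ne', Real.logb_self_eq_one one_lt_two] at this
    have hlπ : 0 ≤ Real.logb 2 Real.pi :=
      Real.logb_nonneg one_lt_two (by linarith [Real.pi_gt_three])
    -- epsilon bounds
    have hsplit : (n:ℝ) ^ κ * (n:ℝ) ^ (1 - κ) = (n:ℝ) := by
      rw [← Real.rpow_add hx0]; norm_num
    have ha1 : (1 + κ + b) * (n:ℝ) ^ κ ≤ ε / 3 * (n:ℝ) := by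
      have h2' : 3 * (1 + κ + b) ≤ (n:ℝ) ^ (1 - κ) * ε := (div_le_iff₀ hε).mp h2
      have h2'' := mul_le_mul_of_nonneg_right h2' (Real.rpow_nonneg hx0.le κ)
      have heq : (n:ℝ) ^ (1 - κ) * ε * (n:ℝ) ^ κ = ε * (n:ℝ) := by
        rw [mul_comm ((n:ℝ) ^ (1 - κ)) ε, mul_assoc, mul_comm ((n:ℝ) ^ (1 - κ)) ((n:ℝ) ^ κ),
          hsplit]
      rw [heq] at h2''
      linarith
    have ha1' := mul_le_mul_of_nonneg_right ha1 hlx0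
    have ha2 : 2 * (n:ℝ) * (|Real.logb 2 C| + |Real.logb 2 a|) + (1 + 2 * b) * (n:ℝ) + (n:ℝ)
        ≤ ε / 3 * ((n:ℝ) * Real.logb 2 (n:ℝ)) := by
      have h3' : 3 * (2 * ((1 + 2 * b) / 2) + 1 + 2 * (|Real.logb 2 C| + |Real.logb 2 a|))
          ≤ Real.logb 2 (n:ℝ) * ε := (div_le_iff₀ hε).mp h3
      have h3'' := mul_le_mul_of_nonneg_right h3' hx0.le
      linarith
    have ha3 : 1 + Real.logb 2 (n:ℝ) ≤ ε / 3 * ((n:ℝ) * Real.logb 2 (n:ℝ)) := by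
      have h4' : 6 ≤ ε * (n:ℝ) := by
        rw [div_le_iff₀ hε] at h4; linarith
      have h4'' := mul_le_mul_of_nonneg_right h4' hlx0
      linarith
    -- product bounds for assembly
    have P1 : nbar n * Real.logb 2 (A n + 2 * r₀ n)
        ≤ nbar n * (Real.logb 2 C + κ * Real.logb 2 (n:ℝ)) :=
      mul_le_mul_of_nonneg_left hlS hnb0.le
    have P2a : nbar n * Real.logb 2 C ≤ nbar n * |Real.logb 2 C| :=
      mul_le_mul_of_nonneg_left (le_abs_self _) hnb0.le
    have P2b : nbar n * |Real.logb 2 C| ≤ 2 * (n:ℝ) * |Real.logb 2 C| :=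
      mul_le_mul_of_nonneg_right hnble (abs_nonneg _)
    have P3a : nbar n * (-|Real.logb 2 a|) ≤ nbar n * Real.logb 2 a :=
      mul_le_mul_of_nonneg_left (neg_abs_le _) hnb0.le
    have P3b : nbar n * |Real.logb 2 a| ≤ 2 * (n:ℝ) * |Real.logb 2 a| :=
      mul_le_mul_of_nonneg_right hnble (abs_nonneg _)
    have P4 : nbar n * Real.logb 2 (nbar n) ≤ nbar n * (1 + Real.logb 2 (n:ℝ)) :=
      mul_le_mul_of_nonneg_left hlnb hnb0.le
    have P5 : nbar n * Real.logb 2 (n:ℝ) ≤ ((n:ℝ) + (n:ℝ) ^ κ) * Real.logb 2 (n:ℝ) :=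
      mul_le_mul_of_nonneg_right hnble' hlx0
    have P7 : (nbar n / 2 + 1) * Real.logb 2 (nbar n)
        ≤ (nbar n / 2 + 1) * (1 + Real.logb 2 (n:ℝ)) :=
      mul_le_mul_of_nonneg_left hlnb (by linarith)
    have P8 : 0 ≤ (nbar n / 2) * Real.logb 2 Real.pi := mul_nonneg (by linarith) hlπ
    have hκxlx : κ * (nbar n * Real.logb 2 (n:ℝ))
        ≤ κ * (((n:ℝ) + (n:ℝ) ^ κ) * Real.logb 2 (n:ℝ)) :=
      mul_le_mul_of_nonneg_left P5 hκ0
    have hbnlx : b * (nbar n * Real.logb 2 (n:ℝ))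
        ≤ b * (((n:ℝ) + (n:ℝ) ^ κ) * Real.logb 2 (n:ℝ)) :=
      mul_le_mul_of_nonneg_left P5 hb.le
    have hbnb : b * nbar n ≤ b * (2 * (n:ℝ)) := mul_le_mul_of_nonneg_left hnble hb.le
    have hbP4 : b * (nbar n * Real.logb 2 (nbar n)) ≤ b * (nbar n * (1 + Real.logb 2 (n:ℝ))) :=
      mul_le_mul_of_nonneg_left P4 hb.le
    -- final log bound
    have hfinal : Real.logb 2 ((2:ℝ) ^ (-(0.599:ℝ) * nbar n) * (A n + 2 * r₀ n) ^ (nbar n)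
        / (Real.pi ^ (nbar n / 2) * r₀ n ^ (nbar n) / Real.Gamma (nbar n / 2 + 1)))
        ≤ (1 + κ + b + ε) * ((n:ℝ) * Real.logb 2 (n:ℝ)) := by
      rw [hRHS, hlr]
      have hc1 : (0:ℝ) ≤ 0.599 * nbar n := by positivity
      linarith [P1, P2a, P2b, P3a, P3b, P4, hbP4, P5, hκxlx, hbnlx, hbnb, P7, P8, hlΓ, ha1',
        ha2, ha3, hnble, hlx1, hnbge, hc1]
    -- conclude for this n
    have hxlxpos : 0 < (n:ℝ) * Real.logb 2 (n:ℝ) := mul_pos hx0 (by linarith)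
    rw [div_le_iff₀ hxlxpos]
    rcases Nat.eq_zero_or_pos (M n) with h | h
    · simp only [h, Nat.cast_zero, Real.logb_zero]
      positivity
    · have hM1 : (1:ℝ) ≤ (M n : ℝ) := by exact_mod_cast h
      calc Real.logb 2 (M n)
          ≤ Real.logb 2 ((2:ℝ) ^ (-(0.599:ℝ) * nbar n) * (A n + 2 * r₀ n) ^ (nbar n)
            / (Real.pi ^ (nbar n / 2) * r₀ n ^ (nbar n) / Real.Gamma (nbar n / 2 + 1))) :=
            Real.logb_le_logb_of_le one_lt_two (by linarith) (hM n hn1)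
        _ ≤ (1 + κ + b + ε) * ((n:ℝ) * Real.logb 2 (n:ℝ)) := hfinal
  by_contra hcon
  push_neg at hcon
  have := key ((Filter.limsup (fun n : ℕ => Real.logb 2 (M n) / ((n : ℝ) * Real.logb 2 n))
      Filter.atTop - (1 + κ + b)) / 2) (by linarith)
  linarith
end
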